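/- arXiv:1908.01241 — 2 statements merged into one kernel-verified Lean document; each statement's English description precedes it below -/
import Mathlib

section
/- Let X_1, ..., X_n be i.i.d. random variables taking values in a set 𝒳, and let g : 𝒳 × 𝒳 → ℝ be a symmetric function with ‖g‖_∞ ≤ b for some b > 0. Define the U-statistic U = (1/C(n,2)) ∑_{1 ≤ i < j ≤ n} g(X_i, X_j). Then for all t > 0, P(|U − E[U]| > t) ≤ 2 exp(−n t² / (8 b²)). -/
/-!
Hoeffding's argument. Averaging over all permutations `σ` of `Fin n` writes `U` as the mean of the
`n!` statistics `V σ = m⁻¹ ∑ k < m, g (X (σ (2k))) (X (σ (2k+1)))`, `m = ⌊n/2⌋`, each an average of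
`m` independent terms in `[-b, b]` with mean `E[U]`. By Hoeffding's lemma `V σ - E[U]` is
sub-Gaussian with parameter `b² / m`, and by convexity of `exp` so is their mean `U - E[U]`. The
Chernoff bound on both tails gives `2 exp (-m t² / (2 b²))`, and `n ≤ 4 m`.
-/

open Finset

section PermutationAverage

variable {α M : Type*} [AddCommMonoid M]

lemma sum_perm_apply_apply_eq [Fintype α] [DecidableEq α] (F : α → α → M) {a b c d : α}
    (hab : a ≠ b) (hcd : c ≠ d) :
    ∑ σ : Equiv.Perm α, F (σ a) (σ b) = ∑ σ : Equiv.Perm α, F (σ c) (σ d) := by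
  obtain ⟨τ, hτ⟩ := Equiv.Perm.exists_extending_pair ![c, d] ![a, b]
    (injective_pair_iff_ne.2 hcd) (injective_pair_iff_ne.2 hab)
  have hτc : τ c = a := hτ 0
  have hτd : τ d = b := hτ 1
  exact Fintype.sum_equiv (Equiv.mulRight τ) _ _ fun σ ↦ by simp [hτc, hτd]

variable [Fintype α] [LinearOrder α]

lemma card_filter_fst_lt_snd :
    #(univ.filter fun p : α × α ↦ p.1 < p.2) = (Fintype.card α).choose 2 := by
  rw [← card_univ, ← card_product_filter_lt, univ_product_univ]

lemma sum_filter_fst_lt_snd_perm {F : α → α → M} (hF : ∀ x y, F x y = F y x)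
    (σ : Equiv.Perm α) :
    ∑ p ∈ univ.filter (fun p : α × α ↦ p.1 < p.2), F (σ p.1) (σ p.2)
      = ∑ p ∈ univ.filter (fun p : α × α ↦ p.1 < p.2), F p.1 p.2 := by
  refine sum_nbij' (fun p ↦ (min (σ p.1) (σ p.2), max (σ p.1) (σ p.2)))
    (fun q ↦ (min (σ.symm q.1) (σ.symm q.2), max (σ.symm q.1) (σ.symm q.2))) ?_ ?_ ?_ ?_ ?_ <;>
    simp only [mem_filter, mem_univ, true_and, Prod.forall]
  · intro x y h
    exact min_lt_max.2 (σ.injective.ne h.ne)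
  · intro x y h
    exact min_lt_max.2 (σ.symm.injective.ne h.ne)
  · intro x y h
    rcases le_total (σ x) (σ y) with h' | h' <;> simp [h', h.le]
  · intro x y h
    rcases le_total (σ.symm x) (σ.symm y) with h' | h' <;> simp [h', h.le]
  · intro x y _
    rcases le_total (σ x) (σ y) with h' | h' <;> simp [h', hF (σ x)]

lemma choose_two_smul_sum_perm_apply_apply {F : α → α → M} (hF : ∀ x y, F x y = F y x)
    {a b : α} (hab : a ≠ b) :
    (Fintype.card α).choose 2 • ∑ σ : Equiv.Perm α, F (σ a) (σ b)
      = (Fintype.card α).factorial • ∑ p ∈ univ.filter (fun p : α × α ↦ p.1 < p.2), F p.1 p.2 :=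
  calc (Fintype.card α).choose 2 • ∑ σ : Equiv.Perm α, F (σ a) (σ b)
      = ∑ p ∈ univ.filter (fun p : α × α ↦ p.1 < p.2), ∑ σ : Equiv.Perm α, F (σ p.1) (σ p.2) := by
        rw [← card_filter_fst_lt_snd, ← sum_const]
        exact sum_congr rfl fun p hp ↦ sum_perm_apply_apply_eq F hab (mem_filter.1 hp).2.ne
    _ = ∑ σ : Equiv.Perm α, ∑ p ∈ univ.filter (fun p : α × α ↦ p.1 < p.2), F (σ p.1) (σ p.2) :=
        sum_comm
    _ = _ := by
        simp_rw [sum_filter_fst_lt_snd_perm hF, sum_const, card_univ, Fintype.card_perm]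

end PermutationAverage

open MeasureTheory ProbabilityTheory Real
open scoped NNReal

lemma ProbabilityTheory.iIndepFun.curry {Ω ι κ 𝓧 : Type*} [MeasurableSpace Ω] [MeasurableSpace 𝓧]
    {P : Measure Ω} [IsProbabilityMeasure P] {X : ι → κ → Ω → 𝓧}
    (mX : ∀ i j, Measurable (X i j)) (h : iIndepFun (fun p : ι × κ ↦ X p.1 p.2) P) :
    iIndepFun (fun i ω j ↦ X i j ω) P := by
  have := fun i j ↦ Measure.isProbabilityMeasure_map (μ := P) (mX i j).aemeasurable
  have hblock : ∀ i, P.map (fun ω j ↦ X i j ω) = Measure.infinitePi (fun j ↦ P.map (X i j)) :=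
    fun i ↦ (h.precomp (Prod.mk_right_injective i)).map_fun_eq_infinitePi_map (mX i)
  rw [iIndepFun_iff_map_fun_eq_infinitePi_map (fun i ↦ measurable_pi_lambda _ (mX i))]
  simp_rw [hblock]
  have hjoint := h.map_fun_eq_infinitePi_map fun p : ι × κ ↦ mX p.1 p.2
  have hmeas : Measurable fun ω (p : ι × κ) ↦ X p.1 p.2 ω := by fun_prop
  rw [← Measure.infinitePi_map_curry (fun i j ↦ P.map (X i j)), ← hjoint,
    Measure.map_map (MeasurableEquiv.measurable _) hmeas]
  rfl

namespace ProbabilityTheory.HasSubgaussianMGF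

variable {Ω : Type*} [MeasurableSpace Ω] {μ : Measure Ω}

lemma sum_mul_of_sum_eq_one {ι : Type*} {X : ι → Ω → ℝ} {c : ℝ≥0} {s : Finset ι} {w : ι → ℝ}
    (hw₀ : ∀ i ∈ s, 0 ≤ w i) (hw₁ : ∑ i ∈ s, w i = 1)
    (h : ∀ i ∈ s, HasSubgaussianMGF (X i) c μ) :
    HasSubgaussianMGF (fun ω ↦ ∑ i ∈ s, w i * X i ω) c μ := by
  have jensen : ∀ t ω, exp (t * ∑ i ∈ s, w i * X i ω) ≤ ∑ i ∈ s, w i * exp (t * X i ω) := by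
    intro t ω
    have := convexOn_exp.map_sum_le hw₀ hw₁ (p := fun i ↦ t * X i ω) (by simp)
    simpa [mul_sum, mul_left_comm t] using this
  have hint : ∀ t, Integrable (fun ω ↦ ∑ i ∈ s, w i * exp (t * X i ω)) μ := fun t ↦
    integrable_finsetSum s fun i hi ↦ ((h i hi).integrable_exp_mul t).const_mul (w i)
  have hint' : ∀ t, Integrable (fun ω ↦ exp (t * ∑ i ∈ s, w i * X i ω)) μ := by
    intro t
    refine (hint t).mono' ?_ (ae_of_all _ fun ω ↦ ?_)
    · exact ((Finset.aemeasurable_fun_sum s fun i hi ↦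
        ((h i hi).aemeasurable.const_mul (w i))).const_mul t).exp.aestronglyMeasurable
    · rw [Real.norm_of_nonneg (exp_pos _).le]
      exact jensen t ω
  refine ⟨hint', fun t ↦ ?_⟩
  calc mgf (fun ω ↦ ∑ i ∈ s, w i * X i ω) μ t
      ≤ ∫ ω, ∑ i ∈ s, w i * exp (t * X i ω) ∂μ :=
        integral_mono (hint' t) (hint t) (jensen t)
    _ = ∑ i ∈ s, w i * mgf (X i) μ t := by
        rw [integral_finsetSum s fun i hi ↦ ((h i hi).integrable_exp_mul t).const_mul (w i)]
        simp_rw [integral_const_mul, mgf]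
    _ ≤ ∑ i ∈ s, w i * exp (c * t ^ 2 / 2) :=
        sum_le_sum fun i hi ↦ mul_le_mul_of_nonneg_left ((h i hi).mgf_le t) (hw₀ i hi)
    _ = exp (c * t ^ 2 / 2) := by rw [← sum_mul, hw₁, one_mul]

lemma measure_le_abs_le [IsFiniteMeasure μ] {X : Ω → ℝ} {c : ℝ≥0}
    (h : HasSubgaussianMGF X c μ) {ε : ℝ} (hε : 0 ≤ ε) :
    μ {ω | ε ≤ |X ω|} ≤ ENNReal.ofReal (2 * exp (-ε ^ 2 / (2 * c))) := by
  have hsplit : {ω | ε ≤ |X ω|} ⊆ {ω | ε ≤ X ω} ∪ {ω | ε ≤ (-X) ω} := by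
    intro ω (hω : ε ≤ |X ω|)
    rcases le_abs'.1 hω with hneg | hpos
    · exact Or.inr (show ε ≤ -X ω by linarith)
    · exact Or.inl hpos
  calc μ {ω | ε ≤ |X ω|} ≤ μ {ω | ε ≤ X ω} + μ {ω | ε ≤ (-X) ω} :=
        (measure_mono hsplit).trans (measure_union_le _ _)
    _ = ENNReal.ofReal (μ.real {ω | ε ≤ X ω} + μ.real {ω | ε ≤ (-X) ω}) := by
        rw [ENNReal.ofReal_add measureReal_nonneg measureReal_nonneg, ofReal_measureReal,
          ofReal_measureReal]
    _ ≤ ENNReal.ofReal (2 * exp (-ε ^ 2 / (2 * c))) := by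
        gcongr
        linarith [h.measure_ge_le hε, h.neg.measure_ge_le hε]

end ProbabilityTheory.HasSubgaussianMGF

lemma ProbabilityTheory.hasSubgaussianMGF_sub_integral_of_abs_le {Ω : Type*} [MeasurableSpace Ω]
    {μ : Measure Ω} [IsProbabilityMeasure μ] {Y : Ω → ℝ} (hY : AEMeasurable Y μ) {b : ℝ}
    (hb : ∀ ω, |Y ω| ≤ b) :
    HasSubgaussianMGF (fun ω ↦ Y ω - μ[Y]) (‖b‖₊ ^ 2) μ := by
  have hc : (‖b - -b‖₊ / 2) ^ 2 = ‖b‖₊ ^ 2 := by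
    rw [sub_neg_eq_add, ← two_mul, nnnorm_mul, Real.nnnorm_ofNat,
      mul_div_cancel_left₀ _ two_ne_zero]
  rw [← hc]
  exact hasSubgaussianMGF_of_mem_Icc hY (ae_of_all _ fun ω ↦ abs_le.1 (hb ω))

section UStatistic

variable {Ω 𝒳 : Type*}

noncomputable def uStat {n : ℕ} (g : 𝒳 → 𝒳 → ℝ) (x : Fin n → 𝒳) : ℝ :=
  (1 / (n.choose 2 : ℝ)) *
    ∑ p ∈ Finset.univ.filter (fun p : Fin n × Fin n => p.1 < p.2), g (x p.1) (x p.2)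

lemma uStat_eq_average_perm {n : ℕ} {g : 𝒳 → 𝒳 → ℝ} (hg : ∀ x y, g x y = g y x)
    {κ : Type*} [Fintype κ] [Nonempty κ] {a c : κ → Fin n} (hac : ∀ k, a k ≠ c k)
    (x : Fin n → 𝒳) :
    uStat g x = ∑ σ : Equiv.Perm (Fin n),
      (n.factorial : ℝ)⁻¹ * ((Fintype.card κ : ℝ)⁻¹ * ∑ k, g (x (σ (a k))) (x (σ (c k)))) := by
  obtain ⟨k₀⟩ := ‹Nonempty κ›
  have hn : 1 < n := by simpa using Fintype.one_lt_card_iff.2 ⟨a k₀, c k₀, hac k₀⟩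
  have hpair : ∀ k, ∑ σ : Equiv.Perm (Fin n), g (x (σ (a k))) (x (σ (c k)))
      = n.factorial / n.choose 2 * ∑ p ∈ Finset.univ.filter (fun p : Fin n × Fin n => p.1 < p.2),
        g (x p.1) (x p.2) := by
    intro k
    have := choose_two_smul_sum_perm_apply_apply (F := fun i j ↦ g (x i) (x j))
      (fun i j ↦ hg _ _) (hac k)
    simp only [Fintype.card_fin, nsmul_eq_mul] at this
    have hC : (n.choose 2 : ℝ) ≠ 0 := Nat.cast_ne_zero.2 (Nat.choose_pos hn).ne'
    rw [div_mul_eq_mul_div, eq_div_iff hC, mul_comm, this]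
  rw [← mul_sum, ← mul_sum, sum_comm, sum_congr rfl fun k _ ↦ hpair k, sum_const, card_univ,
    nsmul_eq_mul, uStat]
  field_simp

variable [MeasurableSpace Ω] [MeasurableSpace 𝒳] {μ : Measure Ω} [IsProbabilityMeasure μ]

lemma integral_comp_pair_eq {ι : Type*} {X : ι → Ω → 𝒳} (hmeas : ∀ i, Measurable (X i))
    (hindep : iIndepFun X μ) (hident : ∀ i j, μ.map (X i) = μ.map (X j))
    {g : 𝒳 → 𝒳 → ℝ} (hg : Measurable (Function.uncurry g)) {x y x' y' : ι} (hxy : x ≠ y)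
    (hxy' : x' ≠ y') :
    ∫ ω, g (X x ω) (X y ω) ∂μ = ∫ ω, g (X x' ω) (X y' ω) ∂μ := by
  have hlaw : ∀ {x y}, x ≠ y → ∫ ω, g (X x ω) (X y ω) ∂μ
      = ∫ q, Function.uncurry g q ∂((μ.map (X x)).prod (μ.map (X y))) := by
    intro x y hxy
    rw [← (indepFun_iff_map_prod_eq_prod_map_map (hmeas x).aemeasurable
      (hmeas y).aemeasurable).1 (hindep.indepFun hxy),
      integral_map ((hmeas x).prodMk (hmeas y)).aemeasurable hg.aestronglyMeasurable]
    rfl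
  rw [hlaw hxy, hlaw hxy', hident x x', hident y y']

lemma integral_uStat {n : ℕ} {X : Fin n → Ω → 𝒳} (hmeas : ∀ i, Measurable (X i))
    (hindep : iIndepFun X μ) (hident : ∀ i j, μ.map (X i) = μ.map (X j))
    {g : 𝒳 → 𝒳 → ℝ} (hg : Measurable (Function.uncurry g)) {b : ℝ} (hgb : ∀ x y, |g x y| ≤ b)
    {x y : Fin n} (hxy : x ≠ y) :
    ∫ ω, uStat g (X · ω) ∂μ = ∫ ω, g (X x ω) (X y ω) ∂μ := by
  have hn : 1 < n := by simpa using Fintype.one_lt_card_iff.2 ⟨x, y, hxy⟩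
  have hint : ∀ i j, Integrable (fun ω ↦ g (X i ω) (X j ω)) μ := fun i j ↦
    .of_bound (hg.comp ((hmeas i).prodMk (hmeas j))).aestronglyMeasurable b
      (ae_of_all _ fun ω ↦ hgb _ _)
  have hC : (n.choose 2 : ℝ) ≠ 0 := Nat.cast_ne_zero.2 (Nat.choose_pos hn).ne'
  simp only [uStat]
  rw [integral_const_mul, integral_finsetSum _ fun p _ ↦ hint _ _,
    sum_congr rfl fun p hp ↦ integral_comp_pair_eq hmeas hindep hident hg
      (mem_filter.1 hp).2.ne hxy, sum_const, card_filter_fst_lt_snd, Fintype.card_fin,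
    nsmul_eq_mul]
  field_simp

lemma hasSubgaussianMGF_average_pairs {ι κ : Type*} [Fintype κ] {X : ι → Ω → 𝒳}
    (hmeas : ∀ i, Measurable (X i)) (hindep : iIndepFun X μ) {e : κ × Fin 2 → ι}
    (he : Function.Injective e) {g : 𝒳 → 𝒳 → ℝ} (hg : Measurable (Function.uncurry g))
    {b : ℝ} (hgb : ∀ x y, |g x y| ≤ b) {θ : ℝ}
    (hθ : ∀ k, ∫ ω, g (X (e (k, 0)) ω) (X (e (k, 1)) ω) ∂μ = θ) :
    HasSubgaussianMGF
      (fun ω ↦ (Fintype.card κ : ℝ)⁻¹ * ∑ k, (g (X (e (k, 0)) ω) (X (e (k, 1)) ω) - θ))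
      (‖b‖₊ ^ 2 / Fintype.card κ) μ := by
  have hblocks : iIndepFun (fun k ω (j : Fin 2) ↦ X (e (k, j)) ω) μ :=
    (hindep.precomp he).curry fun k j ↦ hmeas (e (k, j))
  have hterms : iIndepFun (fun k ω ↦ g (X (e (k, 0)) ω) (X (e (k, 1)) ω) - θ) μ :=
    have hφ : Measurable fun v : Fin 2 → 𝒳 ↦ g (v 0) (v 1) :=
      hg.comp (f := fun v : Fin 2 → 𝒳 ↦ (v 0, v 1)) (by fun_prop)
    hblocks.comp (fun _ v ↦ g (v 0) (v 1) - θ) fun _ ↦ hφ.sub_const θ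
  have hsub : ∀ k ∈ (univ : Finset κ),
      HasSubgaussianMGF (fun ω ↦ g (X (e (k, 0)) ω) (X (e (k, 1)) ω) - θ) (‖b‖₊ ^ 2) μ := by
    intro k _
    rw [← hθ k]
    exact hasSubgaussianMGF_sub_integral_of_abs_le
      (hg.comp ((hmeas _).prodMk (hmeas _))).aemeasurable fun ω ↦ hgb _ _
  convert (HasSubgaussianMGF.sum_of_iIndepFun hterms hsub).const_mul (Fintype.card κ : ℝ)⁻¹ using 1
  refine NNReal.eq ?_
  change _ = (Fintype.card κ : ℝ)⁻¹ ^ 2 * ((∑ _k : κ, ‖b‖₊ ^ 2 : ℝ≥0) : ℝ)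
  push_cast
  rw [sum_const, card_univ, nsmul_eq_mul]
  rcases eq_or_ne (Fintype.card κ : ℝ) 0 with h | h
  · simp [h]
  · field_simp

lemma hasSubgaussianMGF_uStat_sub_integral {n : ℕ} {X : Fin n → Ω → 𝒳}
    (hmeas : ∀ i, Measurable (X i)) (hindep : iIndepFun X μ)
    (hident : ∀ i j, μ.map (X i) = μ.map (X j)) {g : 𝒳 → 𝒳 → ℝ}
    (hg : Measurable (Function.uncurry g)) (hgsym : ∀ x y, g x y = g y x) {b : ℝ}
    (hgb : ∀ x y, |g x y| ≤ b) {κ : Type*} [Fintype κ] [Nonempty κ] {e : κ × Fin 2 → Fin n}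
    (he : Function.Injective e) :
    HasSubgaussianMGF (fun ω ↦ uStat g (X · ω) - ∫ ω', uStat g (X · ω') ∂μ)
      (‖b‖₊ ^ 2 / Fintype.card κ) μ := by
  have hpair : ∀ k, e (k, 0) ≠ e (k, 1) := fun k h ↦ by simpa using he h
  have hmean : ∀ σ : Equiv.Perm (Fin n), ∀ k,
      ∫ ω, g (X ((σ ∘ e) (k, 0)) ω) (X ((σ ∘ e) (k, 1)) ω) ∂μ = ∫ ω, uStat g (X · ω) ∂μ :=
    fun σ k ↦ (integral_uStat hmeas hindep hident hg hgb (σ.injective.ne (hpair k))).symm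
  generalize ∫ ω, uStat g (X · ω) ∂μ = θ at hmean ⊢
  have hV := fun (σ : Equiv.Perm (Fin n)) (_ : σ ∈ univ) ↦
    hasSubgaussianMGF_average_pairs hmeas hindep (σ.injective.comp he) hg hgb (hmean σ)
  refine (HasSubgaussianMGF.sum_mul_of_sum_eq_one (w := fun _ ↦ (n.factorial : ℝ)⁻¹)
    (fun _ _ ↦ by positivity) ?_ hV).congr (ae_of_all _ fun ω ↦ ?_)
  · simp [Fintype.card_perm, (Nat.factorial_pos n).ne']
  · beta_reduce
    rw [uStat_eq_average_perm hgsym hpair]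
    simp only [Function.comp_apply, sum_sub_distrib, sum_const, card_univ, Fintype.card_perm,
      Fintype.card_fin, nsmul_eq_mul, mul_sub]
    rw [inv_mul_cancel_left₀ (Nat.cast_ne_zero.2 Fintype.card_ne_zero),
      mul_inv_cancel_left₀ (Nat.cast_ne_zero.2 (Nat.factorial_ne_zero n))]

end UStatistic

lemma exists_injective_fin_prod_two {n : ℕ} (hn : 2 ≤ n) :
    ∃ m, n ≤ 4 * m ∧ ∃ e : Fin m × Fin 2 → Fin n, Function.Injective e :=
  have h : n / 2 * 2 ≤ n := Nat.div_mul_le_self n 2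
  ⟨n / 2, by omega, Fin.castLE h ∘ finProdFinEquiv,
    (Fin.castLE_injective h).comp finProdFinEquiv.injective⟩

theorem stmt_5_general {Ω 𝒳 : Type*} [MeasurableSpace Ω] [MeasurableSpace 𝒳]
    (μ : Measure Ω) [IsProbabilityMeasure μ]
    (n : ℕ) (hn : 2 ≤ n) (X : Fin n → Ω → 𝒳)
    (hmeas : ∀ i, Measurable (X i))
    (hindep : iIndepFun X μ)
    (hident : ∀ i j, Measure.map (X i) μ = Measure.map (X j) μ)
    (g : 𝒳 → 𝒳 → ℝ) (hgmeas : Measurable (Function.uncurry g))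
    (hgsym : ∀ x y, g x y = g y x)
    (b : ℝ) (hgb : ∀ x y, |g x y| ≤ b) :
    ∀ t : ℝ, 0 < t →
      μ {ω | t <
          |(1 / (n.choose 2 : ℝ)) *
              ∑ p ∈ Finset.univ.filter (fun p : Fin n × Fin n => p.1 < p.2),
                g (X p.1 ω) (X p.2 ω)
            - ∫ ω', (1 / (n.choose 2 : ℝ)) *
                ∑ p ∈ Finset.univ.filter (fun p : Fin n × Fin n => p.1 < p.2),
                  g (X p.1 ω') (X p.2 ω') ∂μ|}
        ≤ ENNReal.ofReal (2 * Real.exp (-(n : ℝ) * t ^ 2 / (8 * b ^ 2))) := by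
  intro t ht
  obtain ⟨m, hnm, e, he⟩ := exists_injective_fin_prod_two hn
  have : NeZero m := ⟨by omega⟩
  have hU := hasSubgaussianMGF_uStat_sub_integral hmeas hindep hident hgmeas hgsym hgb he
  have hc : ((‖b‖₊ ^ 2 / Fintype.card (Fin m) : ℝ≥0) : ℝ) = b ^ 2 / m := by
    push_cast
    rw [Real.norm_eq_abs, sq_abs, Fintype.card_fin]
  have hnm' : (n : ℝ) / 8 ≤ m / 2 := by
    rw [div_le_div_iff₀ (by norm_num) (by norm_num)]
    exact_mod_cast (by omega : n * 2 ≤ m * 8)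
  calc μ {ω | t < |uStat g (X · ω) - ∫ ω', uStat g (X · ω') ∂μ|}
      ≤ μ {ω | t ≤ |uStat g (X · ω) - ∫ ω', uStat g (X · ω') ∂μ|} :=
        measure_mono (Set.ofPred_subset_ofPred.2 fun _ ↦ le_of_lt)
    _ ≤ ENNReal.ofReal (2 * exp (-t ^ 2 / (2 * ↑(‖b‖₊ ^ 2 / Fintype.card (Fin m) : ℝ≥0)))) :=
        hU.measure_le_abs_le ht.le
    _ ≤ ENNReal.ofReal (2 * exp (-(n : ℝ) * t ^ 2 / (8 * b ^ 2))) := by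
        rw [hc, mul_div_assoc', div_div_eq_mul_div,
          show -t ^ 2 * m / (2 * b ^ 2) = -(t ^ 2 / b ^ 2 * (m / 2)) by ring,
          show -(n : ℝ) * t ^ 2 / (8 * b ^ 2) = -(t ^ 2 / b ^ 2 * (n / 8)) by ring]
        gcongr

theorem stmt_5 {Ω 𝒳 : Type*} [MeasurableSpace Ω] [MeasurableSpace 𝒳]
    (μ : Measure Ω) [IsProbabilityMeasure μ]
    (n : ℕ) (hn : 2 ≤ n) (X : Fin n → Ω → 𝒳)
    (hmeas : ∀ i, Measurable (X i))
    (hindep : iIndepFun X μ)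
    (hident : ∀ i j, Measure.map (X i) μ = Measure.map (X j) μ)
    (g : 𝒳 → 𝒳 → ℝ) (hgmeas : Measurable (Function.uncurry g))
    (hgsym : ∀ x y, g x y = g y x)
    (b : ℝ) (hb : 0 < b) (hgb : ∀ x y, |g x y| ≤ b) :
    ∀ t : ℝ, 0 < t →
      μ {ω | t <
          |(1 / (n.choose 2 : ℝ)) *
              ∑ p ∈ Finset.univ.filter (fun p : Fin n × Fin n => p.1 < p.2),
                g (X p.1 ω) (X p.2 ω)
            - ∫ ω', (1 / (n.choose 2 : ℝ)) *
                ∑ p ∈ Finset.univ.filter (fun p : Fin n × Fin n => p.1 < p.2),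
                  g (X p.1 ω') (X p.2 ω') ∂μ|}
        ≤ ENNReal.ofReal (2 * Real.exp (-(n : ℝ) * t ^ 2 / (8 * b ^ 2))) :=
  stmt_5_general μ n hn X hmeas hindep hident g hgmeas hgsym b hgb
end

section
/- Let X be Binomial(m, p) conditioned on nothing, and suppose mp < 1. Then ∑_{z = φ²+1}^{∞} P(X² ≥ z) ≤ 2(φ + 1/(1−mp)) · (mp)^{φ+1} / (1−mp), for any integer φ ≥ 1. -/
/-!
With `q = m p`: the event `z ≤ X²` is `⌈√z⌉ ≤ X`, and `P(X ≥ k) ≤ C(m, k) p^k ≤ q^k` (choose the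
first `k` successes), so the `z`-th term is at most `q^⌈√z⌉`. The value `k` of `⌈√z⌉` is taken by
the `2k - 1` integers of `((k - 1)², k²]`, so the sum is at most `∑_{k > φ} 2k q^k`, an
arithmetico-geometric tail.
-/

open Finset

theorem Nat.choose_add_le_choose_mul_choose (m k j : ℕ) :
    m.choose (k + j) ≤ m.choose k * (m - k).choose j := by
  calc m.choose (k + j) ≤ m.choose (k + j) * (k + j).choose k :=
        Nat.le_mul_of_pos_right _ (Nat.choose_pos (Nat.le_add_right k j))
    _ = m.choose k * (m - k).choose j := by
        rw [Nat.choose_mul (Nat.le_add_right k j), Nat.add_sub_cancel_left]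

theorem binomial_tail_le_choose_mul_pow {p : ℝ} (hp0 : 0 ≤ p) (hp1 : p ≤ 1) (m k : ℕ) :
    ∑ i ∈ (range (m + 1)).filter (fun i => k ≤ i), (m.choose i : ℝ) * p ^ i * (1 - p) ^ (m - i)
      ≤ m.choose k * p ^ k := by
  rcases lt_or_ge m k with hmk | hkm
  · rw [filter_false_of_mem fun i hi => by rw [mem_range] at hi; omega, sum_empty]
    positivity
  have hfilter : (range (m + 1)).filter (fun i => k ≤ i) = Ico k (m + 1) := by
    ext i; simp only [mem_filter, mem_range, mem_Ico]; omega
  have hbinom : ∑ j ∈ range (m - k + 1), ((m - k).choose j : ℝ) * p ^ j * (1 - p) ^ (m - k - j)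
      = 1 := by
    have h := add_pow p (1 - p) (m - k)
    rw [add_sub_cancel, one_pow] at h
    exact (sum_congr rfl fun j _ => by ring).trans h.symm
  rw [hfilter, sum_Ico_eq_sum_range, show m + 1 - k = m - k + 1 by omega]
  calc ∑ j ∈ range (m - k + 1), (m.choose (k + j) : ℝ) * p ^ (k + j) * (1 - p) ^ (m - (k + j))
      ≤ ∑ j ∈ range (m - k + 1),
          m.choose k * p ^ k * (((m - k).choose j : ℝ) * p ^ j * (1 - p) ^ (m - k - j)) := by
        refine sum_le_sum fun j _ => ?_
        rw [pow_add, Nat.sub_add_eq]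
        have hchoose := Nat.cast_le (α := ℝ) |>.2 (Nat.choose_add_le_choose_mul_choose m k j)
        push_cast at hchoose
        have h1p : 0 ≤ 1 - p := by linarith
        calc (m.choose (k + j) : ℝ) * (p ^ k * p ^ j) * (1 - p) ^ (m - k - j)
            ≤ (m.choose k * (m - k).choose j) * (p ^ k * p ^ j) * (1 - p) ^ (m - k - j) := by
              gcongr
          _ = _ := by ring
    _ = m.choose k * p ^ k := by rw [← mul_sum, hbinom, mul_one]

theorem binomial_tail_le_mul_pow {p : ℝ} (hp0 : 0 ≤ p) (hp1 : p ≤ 1) (m k : ℕ) :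
    ∑ i ∈ (range (m + 1)).filter (fun i => k ≤ i), (m.choose i : ℝ) * p ^ i * (1 - p) ^ (m - i)
      ≤ (m * p) ^ k := by
  refine (binomial_tail_le_choose_mul_pow hp0 hp1 m k).trans ?_
  rw [mul_pow]
  gcongr
  exact_mod_cast Nat.choose_le_pow m k

-- For `0 < z`, `Nat.sqrt (z - 1) + 1` is `⌈√z⌉`.
theorem Nat.le_sq_iff_sqrt_sub_one_lt {z i : ℕ} (hz : 0 < z) :
    z ≤ i ^ 2 ↔ Nat.sqrt (z - 1) < i := by
  rw [Nat.sqrt_lt']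
  omega

theorem binomial_sq_tail_le_mul_pow {p : ℝ} (hp0 : 0 ≤ p) (hp1 : p ≤ 1)
    (m : ℕ) {z : ℕ} (hz : 0 < z) :
    ∑ i ∈ (range (m + 1)).filter (fun i => z ≤ i ^ 2), (m.choose i : ℝ) * p ^ i * (1 - p) ^ (m - i)
      ≤ (m * p) ^ (Nat.sqrt (z - 1) + 1) := by
  rw [filter_congr fun i _ => Nat.le_sq_iff_sqrt_sub_one_lt hz]
  exact binomial_tail_le_mul_pow hp0 hp1 m _

theorem sum_Ioc_sq_comp_sqrt_sub_one_add_one {M : Type*} [AddCommMonoid M] (F : ℕ → M) (a b : ℕ) :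
    ∑ z ∈ Ioc (a ^ 2) (b ^ 2), F (Nat.sqrt (z - 1) + 1) = ∑ k ∈ Ioc a b, (2 * k - 1) • F k := by
  induction b with
  | zero => simp
  | succ b ih =>
    rcases lt_or_ge b a with hba | hab
    · rw [Ioc_eq_empty_of_le (by gcongr; omega), Ioc_eq_empty_of_le (by omega), sum_empty,
        sum_empty]
    have hblock : ∀ z ∈ Ioc (b ^ 2) ((b + 1) ^ 2), Nat.sqrt (z - 1) + 1 = b + 1 := by
      intro z hz
      rw [mem_Ioc] at hz
      have h1 : b ≤ Nat.sqrt (z - 1) := Nat.le_sqrt'.2 (by omega)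
      have h2 : Nat.sqrt (z - 1) < b + 1 := (Nat.le_sq_iff_sqrt_sub_one_lt (by omega)).1 hz.2
      omega
    rw [← sum_Ioc_consecutive _ (Nat.pow_le_pow_left hab 2) (Nat.pow_le_pow_left b.le_succ 2),
      sum_Ioc_succ_top hab, ih, sum_congr rfl fun z hz => congrArg F (hblock z hz), sum_const,
      Nat.card_Ioc]
    congr 2
    ring_nf
    omega

theorem hasSum_coe_mul_geometric_tail {𝕜 : Type*} [NormedField 𝕜] {q : 𝕜} (hq : ‖q‖ < 1) (N : ℕ) :
    HasSum (fun j : ℕ => ((N + 1 + j : ℕ) : 𝕜) * q ^ (N + 1 + j))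
      ((N + 1 / (1 - q)) * q ^ (N + 1) / (1 - q)) := by
  have hq1 : 1 - q ≠ 0 := sub_ne_zero.2 fun h => by simp [← h] at hq
  have h := ((hasSum_geometric_of_norm_lt_one hq).mul_left ((N : 𝕜) + 1)).add
    (hasSum_coe_mul_geometric_of_norm_lt_one hq) |>.mul_left (q ^ (N + 1))
  rw [show ((N : 𝕜) + 1 / (1 - q)) * q ^ (N + 1) / (1 - q)
      = q ^ (N + 1) * ((N + 1) * (1 - q)⁻¹ + q / (1 - q) ^ 2) by field_simp; ring]
  exact h.congr_fun fun j => by push_cast; ring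

theorem sum_Ioc_coe_mul_pow_le {q : ℝ} (hq0 : 0 ≤ q) (hq1 : q < 1) (N M : ℕ) :
    ∑ k ∈ Ioc N M, (k : ℝ) * q ^ k ≤ (N + 1 / (1 - q)) * q ^ (N + 1) / (1 - q) := by
  rw [← Ico_add_one_add_one_eq_Ioc, sum_Ico_eq_sum_range]
  exact sum_le_hasSum _ (fun j _ => by positivity)
    (hasSum_coe_mul_geometric_tail (by rwa [Real.norm_of_nonneg hq0]) N)

theorem stmt_13_general (m : ℕ) (p : ℝ) (hp0 : 0 < p) (hp1 : p < 1)
    (hmp : (m : ℝ) * p < 1) (φ : ℕ) :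
    ∑' z : ℕ, (if φ ^ 2 + 1 ≤ z then
        (∑ i ∈ (Finset.range (m + 1)).filter (fun i => z ≤ i ^ 2),
          (m.choose i : ℝ) * p ^ i * (1 - p) ^ (m - i))
      else 0)
      ≤ 2 * ((φ : ℝ) + 1 / (1 - (m : ℝ) * p)) * ((m : ℝ) * p) ^ (φ + 1)
          / (1 - (m : ℝ) * p) := by
  have hq0 : 0 ≤ (m : ℝ) * p := by positivity
  refine Real.tsum_le_of_sum_range_le (fun z => by split_ifs <;> positivity) fun n => ?_
  rw [← sum_filter]
  calc _ ≤ ∑ z ∈ (range n).filter (fun z => φ ^ 2 + 1 ≤ z),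
          ((m : ℝ) * p) ^ (Nat.sqrt (z - 1) + 1) :=
        sum_le_sum fun z hz => binomial_sq_tail_le_mul_pow hp0.le hp1.le m
          (by rw [mem_filter] at hz; omega)
    _ ≤ ∑ z ∈ Ioc (φ ^ 2) (n ^ 2), ((m : ℝ) * p) ^ (Nat.sqrt (z - 1) + 1) := by
        refine sum_le_sum_of_subset_of_nonneg (fun z hz => ?_) fun _ _ _ => by positivity
        simp only [mem_filter, mem_range, mem_Ioc] at hz ⊢
        exact ⟨hz.2, hz.1.le.trans (Nat.le_self_pow two_ne_zero n)⟩
    _ = ∑ k ∈ Ioc φ n, (2 * k - 1) • ((m : ℝ) * p) ^ k :=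
        sum_Ioc_sq_comp_sqrt_sub_one_add_one _ φ n
    _ ≤ 2 * ∑ k ∈ Ioc φ n, (k : ℝ) * ((m : ℝ) * p) ^ k := by
        rw [mul_sum]
        refine sum_le_sum fun k _ => ?_
        rw [nsmul_eq_mul, ← mul_assoc]
        gcongr
        exact_mod_cast Nat.sub_le (2 * k) 1
    _ ≤ 2 * ((φ + 1 / (1 - (m : ℝ) * p)) * ((m : ℝ) * p) ^ (φ + 1) / (1 - (m : ℝ) * p)) := by
        gcongr
        exact sum_Ioc_coe_mul_pow_le hq0 hmp φ n
    _ = _ := by ring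

theorem stmt_13 (m : ℕ) (p : ℝ) (hp0 : 0 < p) (hp1 : p < 1)
    (hmp : (m : ℝ) * p < 1) (φ : ℕ) (hφ : 1 ≤ φ) :
    ∑' z : ℕ, (if φ ^ 2 + 1 ≤ z then
        (∑ i ∈ (Finset.range (m + 1)).filter (fun i => z ≤ i ^ 2),
          (m.choose i : ℝ) * p ^ i * (1 - p) ^ (m - i))
      else 0)
      ≤ 2 * ((φ : ℝ) + 1 / (1 - (m : ℝ) * p)) * ((m : ℝ) * p) ^ (φ + 1)
          / (1 - (m : ℝ) * p) :=
  stmt_13_general m p hp0 hp1 hmp φ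
end
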